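/- Fix a field k, c⃗ = (c₁,…,c_m), and a partition {1,…,m} = I₁ ⊔ I₂ into nonempty subsets. Identify A⁺_{c⃗} with the subalgebra {(a₁,a₂) ∈ A⁺_{c⃗|I₁} × A⁺_{c⃗|I₂} : a₁ and a₂ have equal constant terms}. For j = 1, 2 let B_j ⊆ A⁺_{c⃗|I_j} be a k-subalgebra of corank g_j, let N_j ⊆ B_j be an ideal of B_j contained in the maximal ideal B_j ∩ 𝔪_j, and suppose φ : B₁/N₁ → B₂/N₂ is a k-algebra isomorphism with dim_k(B₁/N₁) = γ + 1. Then B = {(b₁,b₂) ∈ B₁ × B₂ : φ(b₁ + N₁) = b₂ + N₂} is contained in A⁺_{c⃗} and is a k-subalgebra of A⁺_{c⃗} of corank g₁ + g₂ + γ. -/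

import Mathlib

set_option synthInstance.maxHeartbeats 1000000
set_option maxHeartbeats 2000000
open Polynomial

/-- The truncated polynomial ring `k[X]/(X^c)`. -/
abbrev TruncP (k : Type*) [CommRing k] (c : ℕ) : Type _ :=
  Polynomial k ⧸ Ideal.span {(X : Polynomial k) ^ c}

/-- The ambient product algebra `∏ i, k[tᵢ]/(tᵢ^{cᵢ})`. -/
abbrev TruncPi (k : Type*) [CommRing k] {ι : Type*} (c : ι → ℕ) : Type _ :=
  ∀ i, TruncP k (c i)

/-- The image of `X` in `TruncP k c`. -/
noncomputable def truncX (k : Type*) [CommRing k] (c : ℕ) : TruncP k c :=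
  Ideal.Quotient.mk _ X

/-- The monomial `tᵢ^j` in `∏ i, k[tᵢ]/(tᵢ^{cᵢ})`. -/
noncomputable def tpow {k : Type*} [CommRing k] {ι : Type*} [DecidableEq ι]
    (c : ι → ℕ) (i : ι) (j : ℕ) : TruncPi k c :=
  Pi.single i (truncX k (c i) ^ j)

/-- The constant term of a truncated polynomial (evaluation at `0`), for `c ≥ 1`. -/
noncomputable def constTerm (k : Type*) [CommRing k] (c : ℕ) (hc : 1 ≤ c) :
    TruncP k c →ₐ[k] k :=
  Ideal.Quotient.liftₐ _ (aeval (0 : k)) (by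
    intro a ha
    rw [Ideal.mem_span_singleton] at ha
    obtain ⟨q, rfl⟩ := ha
    have h0 : (0 : k) ^ c = 0 := zero_pow (Nat.one_le_iff_ne_zero.mp hc)
    simp [h0])

/-- `A⁺`: the subalgebra of tuples with all constant terms equal. -/
noncomputable def Aplus (k : Type*) [CommRing k] {ι : Type*} (c : ι → ℕ)
    (hc : ∀ i, 1 ≤ c i) : Subalgebra k (TruncPi k c) :=
  ⨅ (i : ι) (j : ι),
    AlgHom.equalizer
      ((constTerm k (c i) (hc i)).comp (Pi.evalAlgHom k (fun i => TruncP k (c i)) i))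
      ((constTerm k (c j) (hc j)).comp (Pi.evalAlgHom k (fun i => TruncP k (c i)) j))

/-- `m_I`: the span of the monomials `tᵢ^j`, `i ∈ I`, `1 ≤ j ≤ cᵢ - 1`. -/
noncomputable def mPart (k : Type*) [CommRing k] {ι : Type*} [DecidableEq ι]
    (c : ι → ℕ) (I : Set ι) : Submodule k (TruncPi k c) :=
  Submodule.span k {x | ∃ i ∈ I, ∃ j, 1 ≤ j ∧ j < c i ∧ x = tpow c i j}

/-- `𝔪^d`: the span of the monomials of degree at least `d`. -/
noncomputable def mPow (k : Type*) [CommRing k] {ι : Type*} [DecidableEq ι]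
    (c : ι → ℕ) (d : ℕ) : Submodule k (TruncPi k c) :=
  Submodule.span k {x | ∃ i, ∃ j, d ≤ j ∧ 1 ≤ j ∧ j < c i ∧ x = tpow c i j}

/-- Componentwise projection onto the coordinates in `I` (the projection along `m_{Iᶜ}`). -/
noncomputable def projL (k : Type*) [CommRing k] {ι : Type*} [DecidableEq ι] (c : ι → ℕ)
    (I : Finset ι) : TruncPi k c →ₗ[k] TruncPi k c where
  toFun x i := if i ∈ I then x i else 0
  map_add' x y := by funext i; by_cases h : i ∈ I <;> simp [h]
  map_smul' r x := by funext i; by_cases h : i ∈ I <;> simp [h]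

/-- Scaling `t ↦ λ·t` on `k[t]/(t^c)`, as a `k`-algebra homomorphism. -/
noncomputable def scaleHom (k : Type*) [CommRing k] (c : ℕ) (lam : k) :
    TruncP k c →ₐ[k] TruncP k c :=
  Ideal.Quotient.liftₐ _ (aeval (lam • truncX k c)) (by
    intro a ha
    rw [Ideal.mem_span_singleton] at ha
    obtain ⟨q, rfl⟩ := ha
    have hx : truncX k c ^ c = 0 := by
      show (Ideal.Quotient.mk (Ideal.span {(X : Polynomial k) ^ c}) X) ^ c = 0
      rw [← map_pow, Ideal.Quotient.eq_zero_iff_mem]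
      exact Ideal.mem_span_singleton_self _
    simp [_root_.smul_pow, hx])

/-- The torus action `tᵢ ↦ λᵢ·tᵢ` on `∏ i, k[tᵢ]/(tᵢ^{cᵢ})`. -/
noncomputable def torusHom {k : Type*} [CommRing k] {ι : Type*} (c : ι → ℕ) (lam : ι → k) :
    TruncPi k c →ₐ[k] TruncPi k c :=
  Pi.algHom k _ fun i => (scaleHom k (c i) (lam i)).comp (Pi.evalAlgHom k _ i)

/-- Restriction of a tuple to the coordinates satisfying `P`, as an algebra hom. -/
noncomputable def restrictAlg (k : Type*) [CommRing k] {ι : Type*} (c : ι → ℕ)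
    (P : ι → Prop) : TruncPi k c →ₐ[k] TruncPi k (fun i : {i // P i} => c i.1) where
  toFun x i := x i.1
  map_one' := rfl
  map_mul' _ _ := rfl
  map_zero' := rfl
  map_add' _ _ := rfl
  commutes' _ := rfl

/-- The set `k·1 ⊕ {b + b' + φ(b')}` associated to a gluing datum. -/
def graphSet {k A : Type*} [CommRing k] [CommRing A] [Algebra k A]
    (bI bI' : Submodule k A) (φ : ↥bI' →ₗ[k] A) : Set A :=
  {z | ∃ r : k, ∃ b ∈ bI, ∃ b' : ↥bI', z = r • (1 : A) + b + ↑b' + φ b'}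


section AuxGluing
variable {k : Type*} [Field k]

instance truncP_module_finite (n : ℕ) : Module.Finite k (TruncP k n) :=
  Module.Finite.of_basis (AdjoinRoot.powerBasis (f := (X : Polynomial k) ^ n)
    (pow_ne_zero _ X_ne_zero)).basis

lemma constTerm_mk (c : ℕ) (hc : 1 ≤ c) (g : Polynomial k) :
    constTerm k c hc (Ideal.Quotient.mk _ g) = g.eval 0 := by
  show (aeval (0 : k)) g = g.eval 0
  simp [aeval_def, eval₂_eq_eval_map]

lemma ct_zero_pow (c : ℕ) (hc : 1 ≤ c) (f : TruncP k c)
    (hf : constTerm k c hc f = 0) : f ^ c = 0 := by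
  obtain ⟨g, rfl⟩ := Ideal.Quotient.mk_surjective f
  rw [constTerm_mk] at hf
  obtain ⟨h, rfl⟩ : (X : Polynomial k) ∣ g :=
    X_dvd_iff.mpr (by rwa [coeff_zero_eq_eval_zero])
  rw [← map_pow, Ideal.Quotient.eq_zero_iff_mem, Ideal.mem_span_singleton, mul_pow]
  exact dvd_mul_right _ _

lemma constTerm_truncX (c : ℕ) (hc : 1 ≤ c) :
    constTerm k c hc (truncX k c) = 0 := by
  rw [truncX, constTerm_mk]; simp

lemma constTerm_zero_of_mem_mPart {ι : Type*} [DecidableEq ι] (c : ι → ℕ) (hc : ∀ i, 1 ≤ c i)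
    (I : Set ι) {x : TruncPi k c} (hx : x ∈ mPart k c I) (i : ι) :
    constTerm k (c i) (hc i) (x i) = 0 := by
  have hle : mPart k c I ≤ LinearMap.ker ((constTerm k (c i) (hc i)).toLinearMap.comp
      (LinearMap.proj i)) := by
    rw [mPart, Submodule.span_le]
    rintro _ ⟨i', hi', j, hj1, hj2, rfl⟩
    simp only [SetLike.mem_coe, LinearMap.mem_ker, LinearMap.comp_apply,
      LinearMap.proj_apply, AlgHom.toLinearMap_apply, tpow]
    rcases eq_or_ne i i' with rfl | hne
    · rw [Pi.single_eq_same, map_pow, constTerm_truncX, zero_pow (by omega)]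
    · rw [Pi.single_eq_of_ne hne, map_zero]
  exact hle hx

lemma mem_Aplus_iff {ι : Type*} (c : ι → ℕ) (hc : ∀ i, 1 ≤ c i) (x : TruncPi k c) :
    x ∈ Aplus k c hc ↔
      ∀ i j, constTerm k (c i) (hc i) (x i) = constTerm k (c j) (hc j) (x j) := by
  simp [Aplus, Algebra.mem_iInf, AlgHom.mem_equalizer]

lemma isNilpotent_of_ct_zero {ι : Type*} [Fintype ι] (c : ι → ℕ) (hc : ∀ i, 1 ≤ c i)
    (x : TruncPi k c) (hx : ∀ i, constTerm k (c i) (hc i) (x i) = 0) : IsNilpotent x := by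
  refine ⟨Finset.univ.sup c, funext fun i => ?_⟩
  have hci : c i ≤ Finset.univ.sup c := Finset.le_sup (Finset.mem_univ i)
  have h0 : (x i) ^ (c i) = 0 := ct_zero_pow _ (hc i) _ (hx i)
  calc (x ^ Finset.univ.sup c) i = (x i) ^ (c i) * (x i) ^ (Finset.univ.sup c - c i) := by
        rw [Pi.pow_apply, ← pow_add, Nat.add_sub_cancel' hci]
  _ = (0 : TruncPi k c) i := by rw [h0, zero_mul, Pi.zero_apply]

lemma finrank_ker_add {V W : Type*} [AddCommGroup V] [Module k V] [AddCommGroup W]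
    [Module k W] [FiniteDimensional k V] (f : V →ₗ[k] W) (hf : Function.Surjective f) :
    Module.finrank k (LinearMap.ker f) + Module.finrank k W = Module.finrank k V := by
  have h := LinearMap.finrank_range_add_finrank_ker f
  rwa [LinearMap.range_eq_top.mpr hf, finrank_top, add_comm] at h

/-- linear equiv between a product subalgebra and the product of subalgebras -/
def algProdEquiv {A B : Type*} [Semiring A] [Algebra k A] [Semiring B] [Algebra k B]
    (S : Subalgebra k A) (T : Subalgebra k B) : ↥(S.prod T) ≃ₗ[k] ↥S × ↥T where
  toFun x := (⟨x.1.1, x.2.1⟩, ⟨x.1.2, x.2.2⟩)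
  invFun y := ⟨(y.1.1, y.2.1), ⟨y.1.2, y.2.2⟩⟩
  left_inv x := rfl
  right_inv y := rfl
  map_add' x y := rfl
  map_smul' r x := rfl

/-- first projection as an algebra hom on a product subalgebra -/
def prodFst {A B : Type*} [Semiring A] [Algebra k A] [Semiring B] [Algebra k B]
    (S : Subalgebra k A) (T : Subalgebra k B) : ↥(S.prod T) →ₐ[k] ↥S where
  toFun p := ⟨p.1.1, p.2.1⟩
  map_one' := rfl
  map_mul' _ _ := rfl
  map_zero' := rfl
  map_add' _ _ := rfl
  commutes' _ := rfl

/-- second projection as an algebra hom on a product subalgebra -/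
def prodSnd {A B : Type*} [Semiring A] [Algebra k A] [Semiring B] [Algebra k B]
    (S : Subalgebra k A) (T : Subalgebra k B) : ↥(S.prod T) →ₐ[k] ↥T where
  toFun p := ⟨p.1.2, p.2.2⟩
  map_one' := rfl
  map_mul' _ _ := rfl
  map_zero' := rfl
  map_add' _ _ := rfl
  commutes' _ := rfl

noncomputable def glueFun {m : ℕ} (c : Fin m → ℕ) (I₁ : Finset (Fin m))
    (a : TruncPi k (fun i : {i : Fin m // i ∈ I₁} => c i.1))
    (b : TruncPi k (fun i : {i : Fin m // i ∈ I₁ᶜ} => c i.1)) : TruncPi k c :=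
  fun i => if h : i ∈ I₁ then a ⟨i, h⟩ else b ⟨i, Finset.mem_compl.mpr h⟩

lemma restrictAlg_apply {ι : Type*} (c : ι → ℕ) (P : ι → Prop) (x : TruncPi k c)
    (i : {i // P i}) : restrictAlg k c P x i = x i.1 := rfl

lemma glue_mem_Aplus {m : ℕ} (c : Fin m → ℕ) (hc : ∀ i, 1 ≤ c i) (I₁ : Finset (Fin m))
    (a : TruncPi k (fun i : {i : Fin m // i ∈ I₁} => c i.1))
    (b : TruncPi k (fun i : {i : Fin m // i ∈ I₁ᶜ} => c i.1))
    (ha : a ∈ Aplus k (fun i : {i : Fin m // i ∈ I₁} => c i.1) (fun i => hc i.1))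
    (hb : b ∈ Aplus k (fun i : {i : Fin m // i ∈ I₁ᶜ} => c i.1) (fun i => hc i.1))
    (hmix : ∀ (i : {i : Fin m // i ∈ I₁}) (j : {i : Fin m // i ∈ I₁ᶜ}),
      constTerm k (c i.1) (hc i.1) (a i) = constTerm k (c j.1) (hc j.1) (b j)) :
    glueFun c I₁ a b ∈ Aplus k c hc := by
  rw [mem_Aplus_iff] at ha hb ⊢
  intro i j
  unfold glueFun
  by_cases hi : i ∈ I₁ <;> by_cases hj : j ∈ I₁
  · rw [dif_pos hi, dif_pos hj]; exact ha ⟨i, hi⟩ ⟨j, hj⟩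
  · rw [dif_pos hi, dif_neg hj]; exact hmix ⟨i, hi⟩ ⟨j, Finset.mem_compl.mpr hj⟩
  · rw [dif_neg hi, dif_pos hj]; exact (hmix ⟨j, hj⟩ ⟨i, Finset.mem_compl.mpr hi⟩).symm
  · rw [dif_neg hi, dif_neg hj]
    exact hb ⟨i, Finset.mem_compl.mpr hi⟩ ⟨j, Finset.mem_compl.mpr hj⟩

end AuxGluing

section Fiber
variable {k : Type*} [Field k]

lemma fiber_finrank {A₁ A₂ : Type*} [CommRing A₁] [CommRing A₂] [Algebra k A₁] [Algebra k A₂]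
    [FiniteDimensional k A₁] [FiniteDimensional k A₂]
    (S : Subalgebra k A₁) (T : Subalgebra k A₂)
    {Q' : Type*} [CommRing Q'] [Algebra k Q'] [Module.Finite k Q']
    (f : ↥S →ₐ[k] Q') (g : ↥T →ₐ[k] Q') (hg : Function.Surjective g)
    (U : Subalgebra k (A₁ × A₂))
    (hU : ∀ p : A₁ × A₂, p ∈ U ↔ ∃ (h1 : p.1 ∈ S) (h2 : p.2 ∈ T), f ⟨p.1, h1⟩ = g ⟨p.2, h2⟩) :
    Module.finrank k ↥U + Module.finrank k Q'
      = Module.finrank k ↥S + Module.finrank k ↥T := by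
  haveI : FiniteDimensional k ↥S :=
    FiniteDimensional.of_injective S.val.toLinearMap Subtype.val_injective
  haveI : FiniteDimensional k ↥T :=
    FiniteDimensional.of_injective T.val.toLinearMap Subtype.val_injective
  haveI : FiniteDimensional k ↥(S.prod T) :=
    FiniteDimensional.of_injective (S.prod T).val.toLinearMap Subtype.val_injective
  set L : ↥(S.prod T) →ₗ[k] Q' :=
    (f.comp (prodFst S T)).toLinearMap - (g.comp (prodSnd S T)).toLinearMap with hL
  have hLsurj : Function.Surjective L := by
    intro z
    obtain ⟨b, hb⟩ := hg (-z)
    refine ⟨⟨(0, (b : A₂)), ⟨zero_mem _, b.2⟩⟩, ?_⟩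
    have e1 : prodFst S T ⟨(0, (b : A₂)), ⟨zero_mem _, b.2⟩⟩ = 0 := Subtype.ext rfl
    have e2 : prodSnd S T ⟨(0, (b : A₂)), ⟨zero_mem _, b.2⟩⟩ = b := Subtype.ext rfl
    rw [hL]
    simp only [LinearMap.sub_apply, AlgHom.toLinearMap_apply, AlgHom.coe_comp,
      Function.comp_apply]
    rw [e1, e2, map_zero, hb, zero_sub, neg_neg]
  have hker : Subalgebra.toSubmodule U
      = Submodule.map (Subalgebra.toSubmodule (S.prod T)).subtype (LinearMap.ker L) := by
    ext p
    simp only [Submodule.mem_map, LinearMap.mem_ker, Subalgebra.mem_toSubmodule,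
      Submodule.coe_subtype]
    constructor
    · intro hp
      obtain ⟨h1, h2, he⟩ := (hU p).mp hp
      refine ⟨⟨p, ⟨h1, h2⟩⟩, ?_, rfl⟩
      rw [hL]
      simp only [LinearMap.sub_apply, AlgHom.toLinearMap_apply, AlgHom.coe_comp,
        Function.comp_apply]
      rw [sub_eq_zero]
      exact he
    · rintro ⟨x, hx, rfl⟩
      rw [hL] at hx
      simp only [LinearMap.sub_apply, AlgHom.toLinearMap_apply, AlgHom.coe_comp,
        Function.comp_apply] at hx
      exact (hU _).mpr ⟨x.2.1, x.2.2, sub_eq_zero.mp hx⟩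
  have h1' : Module.finrank k ↥U = Module.finrank k ↥(LinearMap.ker L) := by
    rw [← Subalgebra.finrank_toSubmodule, hker]
    exact (Submodule.equivMapOfInjective _ (Submodule.injective_subtype _) _).symm.finrank_eq
  have h2' := finrank_ker_add L hLsurj
  have h3' : Module.finrank k ↥(S.prod T) = Module.finrank k ↥S + Module.finrank k ↥T := by
    rw [(algProdEquiv S T).finrank_eq, Module.finrank_prod]
  omega

end Fiber
/-- Isom-Hilb gluing at field points: given corank-`g₁`, `g₂` subalgebras
`B₁ ⊆ A⁺_{c|I₁}`, `B₂ ⊆ A⁺_{c|I₂}`, ideals `Nⱼ ⊆ Bⱼ` contained in the maximal ideals, and a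
`k`-algebra isomorphism `φ : B₁/N₁ ≃ B₂/N₂` with `dim (B₁/N₁) = γ + 1`, the fibered set
`B = {(b₁,b₂) : φ(b₁ + N₁) = b₂ + N₂}` is contained in (the image of) `A⁺_c` and is a
subalgebra of corank `g₁ + g₂ + γ`.  The quotients `Bⱼ/Nⱼ` are presented as `k`-algebras
`Qⱼ` with surjections `qⱼ : Bⱼ → Qⱼ` of kernel `Nⱼ`. -/
theorem isom_hilb_gluing
    {k : Type*} [Field k] {m : ℕ} (c : Fin m → ℕ) (hc : ∀ i, 1 ≤ c i)
    (I₁ : Finset (Fin m)) (h1 : I₁.Nonempty) (h2 : I₁ᶜ.Nonempty)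
    (B₁ : Subalgebra k (TruncPi k (fun i : {i : Fin m // i ∈ I₁} => c i.1)))
    (hB₁ : B₁ ≤ Aplus k (fun i : {i : Fin m // i ∈ I₁} => c i.1) (fun i => hc i.1))
    (B₂ : Subalgebra k (TruncPi k (fun i : {i : Fin m // i ∈ I₁ᶜ} => c i.1)))
    (hB₂ : B₂ ≤ Aplus k (fun i : {i : Fin m // i ∈ I₁ᶜ} => c i.1) (fun i => hc i.1))
    (g₁ g₂ γ : ℕ)
    (hg1 : Module.finrank k ↥B₁ + g₁
      = Module.finrank k ↥(Aplus k (fun i : {i : Fin m // i ∈ I₁} => c i.1) (fun i => hc i.1)))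
    (hg2 : Module.finrank k ↥B₂ + g₂
      = Module.finrank k ↥(Aplus k (fun i : {i : Fin m // i ∈ I₁ᶜ} => c i.1) (fun i => hc i.1)))
    (N₁ : Ideal ↥B₁)
    (hN₁ : ∀ x ∈ N₁, ((x : ↥B₁) : TruncPi k (fun i : {i : Fin m // i ∈ I₁} => c i.1))
      ∈ mPart k _ Set.univ)
    (N₂ : Ideal ↥B₂)
    (hN₂ : ∀ x ∈ N₂, ((x : ↥B₂) : TruncPi k (fun i : {i : Fin m // i ∈ I₁ᶜ} => c i.1))
      ∈ mPart k _ Set.univ)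
    (Q₁ : Type*) [CommRing Q₁] [Algebra k Q₁]
    (q₁ : ↥B₁ →ₐ[k] Q₁) (hq₁ : Function.Surjective q₁) (hker₁ : RingHom.ker q₁ = N₁)
    (Q₂ : Type*) [CommRing Q₂] [Algebra k Q₂]
    (q₂ : ↥B₂ →ₐ[k] Q₂) (hq₂ : Function.Surjective q₂) (hker₂ : RingHom.ker q₂ = N₂)
    (φ : Q₁ ≃ₐ[k] Q₂)
    (hγ : Module.finrank k Q₁ = γ + 1) :
    let Bset : Set ((TruncPi k (fun i : {i : Fin m // i ∈ I₁} => c i.1))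
        × (TruncPi k (fun i : {i : Fin m // i ∈ I₁ᶜ} => c i.1))) :=
      {p | ∃ (hp1 : p.1 ∈ B₁) (hp2 : p.2 ∈ B₂), φ (q₁ ⟨p.1, hp1⟩) = q₂ ⟨p.2, hp2⟩}
    (Bset ⊆ (fun x : TruncPi k c =>
        (restrictAlg k c (· ∈ I₁) x, restrictAlg k c (· ∈ I₁ᶜ) x)) '' ↑(Aplus k c hc)) ∧
    ∃ Bsub : Subalgebra k ((TruncPi k (fun i : {i : Fin m // i ∈ I₁} => c i.1))
        × (TruncPi k (fun i : {i : Fin m // i ∈ I₁ᶜ} => c i.1))),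
      (Bsub : Set _) = Bset ∧
      Module.finrank k ↥Bsub + (g₁ + g₂ + γ) = Module.finrank k ↥(Aplus k c hc) := by
  intro Bset
  have key : ∀ p ∈ Bset, ∀ (i : {i : Fin m // i ∈ I₁}) (j : {i : Fin m // i ∈ I₁ᶜ}),
      constTerm k (c i.1) (hc i.1) (p.1 i) = constTerm k (c j.1) (hc j.1) (p.2 j) := by
    rintro ⟨x₁, x₂⟩ ⟨hp1, hp2, hφeq⟩ i j
    have hφeq' : φ (q₁ ⟨x₁, hp1⟩) = q₂ ⟨x₂, hp2⟩ := hφeq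
    set r : k := constTerm k (c i.1) (hc i.1) (x₁ i) with hr
    have hA1 := (mem_Aplus_iff _ _ _).mp (hB₁ hp1)
    have hA2 := (mem_Aplus_iff _ _ _).mp (hB₂ hp2)
    have hnilamb : IsNilpotent (x₁
        - algebraMap k (TruncPi k (fun i : {i : Fin m // i ∈ I₁} => c i.1)) r) := by
      apply isNilpotent_of_ct_zero (fun i : {i : Fin m // i ∈ I₁} => c i.1) (fun i' => hc i'.1)
      intro i'
      rw [Pi.sub_apply, map_sub]
      have e : (algebraMap k (TruncPi k (fun i : {i : Fin m // i ∈ I₁} => c i.1)) r) i'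
          = algebraMap k (TruncP k (c i'.1)) r := rfl
      rw [e, AlgHom.commutes, Algebra.algebraMap_self, RingHom.id_apply, sub_eq_zero]
      exact hA1 i' i
    have hnilB : IsNilpotent ((⟨x₁, hp1⟩ : ↥B₁) - algebraMap k ↥B₁ r) := by
      obtain ⟨n, hn⟩ := hnilamb
      refine ⟨n, Subtype.ext ?_⟩
      rw [SubmonoidClass.coe_pow, AddSubgroupClass.coe_sub]
      rw [show ((algebraMap k ↥B₁ r : ↥B₁) : TruncPi k (fun i : {i : Fin m // i ∈ I₁} => c i.1))
        = algebraMap k _ r from rfl]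
      exact hn
    have hq2x : q₂ (⟨x₂, hp2⟩ - algebraMap k ↥B₂ r)
        = φ (q₁ (⟨x₁, hp1⟩ - algebraMap k ↥B₁ r)) := by
      have ha : q₂ (⟨x₂, hp2⟩ - algebraMap k ↥B₂ r) = q₂ ⟨x₂, hp2⟩ - algebraMap k Q₂ r := by
        exact (map_sub q₂ _ _).trans (by rw [AlgHom.commutes])
      have hb : φ (q₁ (⟨x₁, hp1⟩ - algebraMap k ↥B₁ r))
          = φ (q₁ ⟨x₁, hp1⟩) - algebraMap k Q₂ r := by
        rw [map_sub q₁ _ _, map_sub φ _ _, AlgHom.commutes, AlgEquiv.commutes]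
      rw [ha, hb, hφeq']
    have hnilQ : IsNilpotent (q₂ (⟨x₂, hp2⟩ - algebraMap k ↥B₂ r)) := by
      rw [hq2x]
      exact (hnilB.map q₁).map φ
    obtain ⟨n, hn⟩ := hnilQ
    rcases Nat.eq_zero_or_pos n with rfl | hn0
    · exfalso
      haveI : Nontrivial Q₁ := Module.nontrivial_of_finrank_pos (R := k)
        (by rw [hγ]; omega)
      haveI : Nontrivial Q₂ := φ.symm.toEquiv.nontrivial
      rw [pow_zero] at hn
      exact one_ne_zero hn
    · have hmem : ((⟨x₂, hp2⟩ : ↥B₂) - algebraMap k ↥B₂ r) ^ n ∈ N₂ := by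
        rw [← hker₂]
        have : q₂ (((⟨x₂, hp2⟩ : ↥B₂) - algebraMap k ↥B₂ r) ^ n) = 0 := by
          rw [map_pow]; exact hn
        exact this
      have hct := constTerm_zero_of_mem_mPart
        (fun i : {i : Fin m // i ∈ I₁ᶜ} => c i.1) (fun i' => hc i'.1) Set.univ
        (hN₂ _ hmem) j
      have hcoe2 : ((((⟨x₂, hp2⟩ : ↥B₂) - algebraMap k ↥B₂ r) ^ n : ↥B₂)
            : TruncPi k (fun i : {i : Fin m // i ∈ I₁ᶜ} => c i.1))
          = (x₂ - algebraMap k (TruncPi k (fun i : {i : Fin m // i ∈ I₁ᶜ} => c i.1)) r) ^ n := by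
        rw [SubmonoidClass.coe_pow, AddSubgroupClass.coe_sub]
        rfl
      rw [hcoe2, Pi.pow_apply, Pi.sub_apply] at hct
      rw [show (algebraMap k (TruncPi k (fun i : {i : Fin m // i ∈ I₁ᶜ} => c i.1)) r) j
        = algebraMap k (TruncP k (c j.1)) r from rfl] at hct
      rw [map_pow, map_sub, AlgHom.commutes] at hct
      have h0 := pow_eq_zero_iff (Nat.pos_iff_ne_zero.mp hn0) |>.mp hct
      have h0' := sub_eq_zero.mp h0
      rw [show (algebraMap k k) r = r from rfl] at h0'
      exact h0'.symm
  constructor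
  · rintro ⟨x₁, x₂⟩ ⟨hp1, hp2, hφeq⟩
    refine ⟨glueFun c I₁ x₁ x₂, glue_mem_Aplus c hc I₁ x₁ x₂ (hB₁ hp1) (hB₂ hp2)
      (key (x₁, x₂) ⟨hp1, hp2, hφeq⟩), ?_⟩
    refine Prod.ext ?_ ?_
    · funext i
      show (if h : i.1 ∈ I₁ then x₁ ⟨i.1, h⟩ else x₂ ⟨i.1, Finset.mem_compl.mpr h⟩) = x₁ i
      rw [dif_pos i.2]
    · funext i
      show (if h : i.1 ∈ I₁ then x₁ ⟨i.1, h⟩ else x₂ ⟨i.1, Finset.mem_compl.mpr h⟩) = x₂ i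
      rw [dif_neg (Finset.mem_compl.mp i.2)]
  · -- dimension count
    haveI : FiniteDimensional k (TruncPi k (fun i : {i : Fin m // i ∈ I₁} => c i.1)) :=
      inferInstance
    haveI : FiniteDimensional k (TruncPi k (fun i : {i : Fin m // i ∈ I₁ᶜ} => c i.1)) :=
      inferInstance
    haveI : FiniteDimensional k ↥B₁ :=
      FiniteDimensional.of_injective B₁.val.toLinearMap Subtype.val_injective
    haveI : FiniteDimensional k ↥B₂ :=
      FiniteDimensional.of_injective B₂.val.toLinearMap Subtype.val_injective
    haveI : Module.Finite k Q₁ := Module.Finite.of_surjective q₁.toLinearMap hq₁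
    haveI : Module.Finite k Q₂ := Module.Finite.of_surjective q₂.toLinearMap hq₂
    -- the subalgebra
    let Bsub : Subalgebra k ((TruncPi k (fun i : {i : Fin m // i ∈ I₁} => c i.1))
        × (TruncPi k (fun i : {i : Fin m // i ∈ I₁ᶜ} => c i.1))) :=
      { carrier := Bset
        mul_mem' := by
          rintro a b ⟨ha1, ha2, hae⟩ ⟨hb1, hb2, hbe⟩
          refine ⟨mul_mem ha1 hb1, mul_mem ha2 hb2, ?_⟩
          have e1 : (⟨(a * b).1, mul_mem ha1 hb1⟩ : ↥B₁) = ⟨a.1, ha1⟩ * ⟨b.1, hb1⟩ := rfl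
          have e2 : (⟨(a * b).2, mul_mem ha2 hb2⟩ : ↥B₂) = ⟨a.2, ha2⟩ * ⟨b.2, hb2⟩ := rfl
          rw [e1, e2, map_mul, map_mul, map_mul, hae, hbe]
        one_mem' := by
          refine ⟨one_mem B₁, one_mem B₂, ?_⟩
          show φ (q₁ 1) = q₂ 1
          rw [map_one, map_one, map_one]
        add_mem' := by
          rintro a b ⟨ha1, ha2, hae⟩ ⟨hb1, hb2, hbe⟩
          refine ⟨add_mem ha1 hb1, add_mem ha2 hb2, ?_⟩
          have e1 : (⟨(a + b).1, add_mem ha1 hb1⟩ : ↥B₁) = ⟨a.1, ha1⟩ + ⟨b.1, hb1⟩ := rfl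
          have e2 : (⟨(a + b).2, add_mem ha2 hb2⟩ : ↥B₂) = ⟨a.2, ha2⟩ + ⟨b.2, hb2⟩ := rfl
          rw [e1, e2, map_add, map_add, map_add, hae, hbe]
        zero_mem' := by
          refine ⟨zero_mem B₁, zero_mem B₂, ?_⟩
          show φ (q₁ 0) = q₂ 0
          rw [map_zero, map_zero, map_zero]
        algebraMap_mem' := by
          intro rr
          refine ⟨B₁.algebraMap_mem rr, B₂.algebraMap_mem rr, ?_⟩
          show φ (q₁ (algebraMap k ↥B₁ rr)) = q₂ (algebraMap k ↥B₂ rr)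
          rw [AlgHom.commutes, AlgHom.commutes, AlgEquiv.commutes] }
    refine ⟨Bsub, rfl, ?_⟩
    -- B-side count
    have hBcount := fiber_finrank B₁ B₂ (φ.toAlgHom.comp q₁) q₂ hq₂ Bsub (fun p => Iff.rfl)
    have hQ2rank : Module.finrank k Q₂ = γ + 1 := by
      rw [← φ.toLinearEquiv.finrank_eq, hγ]
    -- A-side setup
    let i₀ : {i : Fin m // i ∈ I₁} := ⟨h1.choose, h1.choose_spec⟩
    let j₀ : {i : Fin m // i ∈ I₁ᶜ} := ⟨h2.choose, h2.choose_spec⟩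
    let α₁ : ↥(Aplus k (fun i : {i : Fin m // i ∈ I₁} => c i.1) (fun i => hc i.1)) →ₐ[k] k := (constTerm k (c i₀.1) (hc i₀.1)).comp
      ((Pi.evalAlgHom k (fun i : {i : Fin m // i ∈ I₁} => TruncP k (c i.1)) i₀).comp (Aplus k (fun i : {i : Fin m // i ∈ I₁} => c i.1) (fun i => hc i.1)).val)
    let α₂ : ↥(Aplus k (fun i : {i : Fin m // i ∈ I₁ᶜ} => c i.1) (fun i => hc i.1)) →ₐ[k] k := (constTerm k (c j₀.1) (hc j₀.1)).comp
      ((Pi.evalAlgHom k (fun i : {i : Fin m // i ∈ I₁ᶜ} => TruncP k (c i.1)) j₀).comp (Aplus k (fun i : {i : Fin m // i ∈ I₁ᶜ} => c i.1) (fun i => hc i.1)).val)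
    have hα₂surj : Function.Surjective α₂ := by
      intro rr
      refine ⟨algebraMap k ↥(Aplus k (fun i : {i : Fin m // i ∈ I₁ᶜ} => c i.1) (fun i => hc i.1)) rr, ?_⟩
      rw [AlgHom.commutes]
      rfl
    let pairHom : TruncPi k c →ₐ[k]
        ((TruncPi k (fun i : {i : Fin m // i ∈ I₁} => c i.1))
          × (TruncPi k (fun i : {i : Fin m // i ∈ I₁ᶜ} => c i.1))) :=
      (restrictAlg k c (· ∈ I₁)).prod (restrictAlg k c (· ∈ I₁ᶜ))
    have hUA : ∀ p : (TruncPi k (fun i : {i : Fin m // i ∈ I₁} => c i.1))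
        × (TruncPi k (fun i : {i : Fin m // i ∈ I₁ᶜ} => c i.1)),
        p ∈ Subalgebra.map pairHom (Aplus k c hc) ↔
        ∃ (hp1 : p.1 ∈ (Aplus k (fun i : {i : Fin m // i ∈ I₁} => c i.1) (fun i => hc i.1))) (hp2 : p.2 ∈ (Aplus k (fun i : {i : Fin m // i ∈ I₁ᶜ} => c i.1) (fun i => hc i.1))), α₁ ⟨p.1, hp1⟩ = α₂ ⟨p.2, hp2⟩ := by
      intro p
      constructor
      · rintro ⟨x, hx, rfl⟩
        have hx' := (mem_Aplus_iff c hc x).mp hx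
        have m1 : (pairHom x).1 ∈ (Aplus k (fun i : {i : Fin m // i ∈ I₁} => c i.1) (fun i => hc i.1)) := by
          rw [mem_Aplus_iff]; intro i j; exact hx' i.1 j.1
        have m2 : (pairHom x).2 ∈ (Aplus k (fun i : {i : Fin m // i ∈ I₁ᶜ} => c i.1) (fun i => hc i.1)) := by
          rw [mem_Aplus_iff]; intro i j; exact hx' i.1 j.1
        exact ⟨m1, m2, hx' i₀.1 j₀.1⟩
      · rintro ⟨m1, m2, he⟩
        refine ⟨glueFun c I₁ p.1 p.2, ?_, ?_⟩
        · apply glue_mem_Aplus c hc I₁ _ _ m1 m2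
          intro i j
          have e1 := (mem_Aplus_iff _ (fun i : {i : Fin m // i ∈ I₁} => hc i.1) _).mp m1 i i₀
          have e2 := (mem_Aplus_iff _ (fun i : {i : Fin m // i ∈ I₁ᶜ} => hc i.1) _).mp m2 j₀ j
          exact e1.trans (he.trans e2)
        · refine Prod.ext ?_ ?_
          · funext i
            show (if h : i.1 ∈ I₁ then p.1 ⟨i.1, h⟩ else p.2 ⟨i.1, Finset.mem_compl.mpr h⟩)
              = p.1 i
            rw [dif_pos i.2]
          · funext i
            show (if h : i.1 ∈ I₁ then p.1 ⟨i.1, h⟩ else p.2 ⟨i.1, Finset.mem_compl.mpr h⟩)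
              = p.2 i
            rw [dif_neg (Finset.mem_compl.mp i.2)]
    have hAcount := fiber_finrank (Aplus k (fun i : {i : Fin m // i ∈ I₁} => c i.1) (fun i => hc i.1)) (Aplus k (fun i : {i : Fin m // i ∈ I₁ᶜ} => c i.1) (fun i => hc i.1)) α₁ α₂ hα₂surj
      (Subalgebra.map pairHom (Aplus k c hc)) hUA
    have hpairinj : Function.Injective pairHom := by
      intro x y hxy
      funext i
      by_cases hi : i ∈ I₁
      · exact congrFun (congrArg Prod.fst hxy) ⟨i, hi⟩
      · exact congrFun (congrArg Prod.snd hxy) ⟨i, Finset.mem_compl.mpr hi⟩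
    have hmapeq : Module.finrank k ↥(Subalgebra.map pairHom (Aplus k c hc))
        = Module.finrank k ↥(Aplus k c hc) := by
      rw [← Subalgebra.finrank_toSubmodule, ← Subalgebra.finrank_toSubmodule,
        Subalgebra.map_toSubmodule]
      exact (Submodule.equivMapOfInjective pairHom.toLinearMap hpairinj _).symm.finrank_eq
    rw [hmapeq, Module.finrank_self] at hAcount
    rw [hQ2rank] at hBcount
    omega
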